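/- Let $A$ be a commutative associative unital $\mathbb{C}$-algebra, and in $U(\mathfrak{gl}_N \otimes A)$ define $T_k(b_1,\dots,b_k) = \sum_{i_1,\dots,i_k} E_{i_1 i_2}(b_1) E_{i_2 i_3}(b_2) \cdots E_{i_k i_1}(b_k)$ where $E_{ij}(b) = E_{ij} \otimes b$. Then $[T_k(b_1,\dots,b_k), E_{j_1 j_2} \otimes 1] = 0$ for all $j_1, j_2$, i.e. $T_k(b_1,\dots,b_k)$ commutes with $\mathfrak{gl}_N \cong \mathfrak{gl}_N \otimes 1$. -/

import Mathlib

open TensorProduct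

attribute [local instance 100] LieRing.ofAssociativeRing

noncomputable section

variable (A : Type*) [CommRing A] [Algebra ℂ A]

/-- The current Lie algebra `gl_N ⊗ A` is a Lie algebra over `ℂ`. -/
instance currentGl.instLieAlgebra (N : ℕ) :
    LieAlgebra ℂ (A ⊗[ℂ] Matrix (Fin N) (Fin N) ℂ) where
  lie_smul c x y := by
    rw [← algebraMap_smul A c y, ← algebraMap_smul A c ⁅x, y⁆]
    exact LieAlgebra.lie_smul (algebraMap ℂ A c) x y

/-- The Gelfand-type invariant
`T_k(b₁,…,b_k) = ∑ E_{i₁i₂}(b₁) E_{i₂i₃}(b₂) ⋯ E_{i_k i₁}(b_k)`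
in `U(gl_N ⊗ A)`; here `E_{ij}(b) = E_{ij} ⊗ b`, and the cyclic index
structure is encoded by addition in `Fin k`. -/
def glT (N k : ℕ) (b : Fin k → A) :
    UniversalEnvelopingAlgebra ℂ (A ⊗[ℂ] Matrix (Fin N) (Fin N) ℂ) :=
  ∑ i : Fin k → Fin N,
    (List.ofFn (fun r : Fin k =>
      UniversalEnvelopingAlgebra.ι ℂ
        (b r ⊗ₜ[ℂ] Matrix.single (i r) (i ⟨((r : ℕ) + 1) % k, Nat.mod_lt _ r.pos⟩) (1 : ℂ)))).prod

/-! Let `E(c) = (E_{ab} ⊗ c)_{a,b}`, a matrix with entries in `U`; expanding the trace of a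
product as a sum over closed walks gives `T_k(b₁,…,b_k) = tr (E(b₁) ⋯ E(b_k))`. For
`x = E_{j₁j₂} ⊗ 1`, the entrywise commutator `[x, E(c)]` equals `E_{j₂j₁} E(c) - E(c) E_{j₂j₁}`,
so `x I - E_{j₂j₁}` commutes with every `E(c)` and hence with `P = E(b₁) ⋯ E(b_k)`. Taking
traces, `x tr P - tr P x = tr [E_{j₂j₁}, P] = 0`. -/

namespace Matrix

variable {n R : Type*} [Fintype n] [DecidableEq n]

section Semiring

variable [Semiring R]

/-- `p` lists the interior vertices of a walk of length `k + 1` from `a` to `c`. -/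
theorem list_prod_ofFn_apply : ∀ {k : ℕ} (M : Fin (k + 1) → Matrix n n R) (a c : n),
    (List.ofFn M).prod a c = ∑ p : Fin k → n, (List.ofFn fun r =>
      M r (Fin.cons (α := fun _ => n) a p r) (Fin.snoc (α := fun _ => n) p c r)).prod
  | 0, M, a, c => by simp [Fin.snoc]
  | k + 1, M, a, c => by
    rw [List.ofFn_succ, List.prod_cons, mul_apply, ← (Fin.consEquiv fun _ => n).sum_comp,
      Fintype.sum_prod_type]
    refine Finset.sum_congr rfl fun m _ => ?_
    rw [list_prod_ofFn_apply, Finset.mul_sum]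
    refine Finset.sum_congr rfl fun p _ => ?_
    simp [List.ofFn_succ, Fin.consEquiv, ← Fin.cons_snoc_eq_snoc_cons]

theorem trace_list_prod_ofFn {k : ℕ} (M : Fin (k + 1) → Matrix n n R) :
    (List.ofFn M).prod.trace =
      ∑ i : Fin (k + 1) → n, (List.ofFn fun r => M r (i r) (i (finRotate _ r))).prod := by
  simp only [trace, diag_apply, list_prod_ofFn_apply, Fin.snoc_eq_cons_rotate]
  rw [← (Fin.consEquiv fun _ => n).sum_comp, Fintype.sum_prod_type]
  rfl

theorem single_one_mul_single_one (i j k l : n) :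
    single i j (1 : R) * single k l 1 = if j = k then single i l 1 else 0 := by
  split_ifs with h
  · rw [h, single_mul_single_same, one_mul]
  · exact single_mul_single_of_ne _ _ _ _ h _

end Semiring

theorem commute_trace_of_commute_diagonal_sub_single [Ring R] {x : R} {i j : n}
    {P : Matrix n n R} (h : Commute (diagonal (fun _ => x) - single i j 1) P) :
    Commute x P.trace := by
  have h' : diagonal (fun _ => x) * P - P * diagonal (fun _ => x) =
      single i j 1 * P - P * single i j 1 := by
    rw [sub_eq_sub_iff_sub_eq_sub, ← sub_mul, ← mul_sub]
    exact h
  calc x * P.trace = (diagonal (fun _ => x) * P).trace := by simp [trace, Finset.mul_sum]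
    _ = (P * diagonal (fun _ => x)).trace := by
      rw [← sub_eq_zero, ← trace_sub, h', trace_sub, trace_single_mul, trace_mul_single]
      simp
    _ = P.trace * x := by simp [trace, Finset.sum_mul]

end Matrix

section CurrentMatrix

open Matrix

variable {A}

def currentMatrix (N : ℕ) (c : A) :
    Matrix (Fin N) (Fin N) (UniversalEnvelopingAlgebra ℂ (A ⊗[ℂ] Matrix (Fin N) (Fin N) ℂ)) :=
  of fun a b => UniversalEnvelopingAlgebra.ι ℂ (c ⊗ₜ[ℂ] single a b (1 : ℂ))

variable {N : ℕ}

theorem ι_one_tmul_commutator (X Y : Matrix (Fin N) (Fin N) ℂ) (c : A) :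
    UniversalEnvelopingAlgebra.ι ℂ ((1 : A) ⊗ₜ[ℂ] X) * UniversalEnvelopingAlgebra.ι ℂ (c ⊗ₜ[ℂ] Y) -
        UniversalEnvelopingAlgebra.ι ℂ (c ⊗ₜ[ℂ] Y) * UniversalEnvelopingAlgebra.ι ℂ ((1 : A) ⊗ₜ[ℂ] X) =
      UniversalEnvelopingAlgebra.ι ℂ (c ⊗ₜ[ℂ] (X * Y - Y * X)) := by
  rw [← Ring.lie_def, ← LieHom.map_lie, LieAlgebra.ExtendScalars.bracket_tmul, one_mul,
    Ring.lie_def]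

theorem currentMatrix_commutator_apply (j₁ j₂ a b : Fin N) (c : A) :
    UniversalEnvelopingAlgebra.ι ℂ ((1 : A) ⊗ₜ[ℂ] single j₁ j₂ (1 : ℂ)) * currentMatrix N c a b -
        currentMatrix N c a b * UniversalEnvelopingAlgebra.ι ℂ ((1 : A) ⊗ₜ[ℂ] single j₁ j₂ (1 : ℂ)) =
      (if j₂ = a then currentMatrix N c j₁ b else 0) -
        if b = j₁ then currentMatrix N c a j₂ else 0 := by
  simp only [currentMatrix, of_apply]
  rw [ι_one_tmul_commutator, single_one_mul_single_one, single_one_mul_single_one]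
  split_ifs <;> simp only [tmul_sub, tmul_zero, map_sub, map_zero]

theorem commute_diagonal_sub_single_currentMatrix (j₁ j₂ : Fin N) (c : A) :
    Commute (diagonal (fun _ => UniversalEnvelopingAlgebra.ι ℂ ((1 : A) ⊗ₜ[ℂ] single j₁ j₂ (1 : ℂ)))
      - single j₂ j₁ 1) (currentMatrix N c) := by
  rw [commute_iff_eq]
  ext a b
  rw [sub_mul, mul_sub, Matrix.sub_apply, Matrix.sub_apply, diagonal_mul, mul_diagonal,
    sub_eq_sub_iff_sub_eq_sub, currentMatrix_commutator_apply]
  simp [mul_apply, single_apply, ite_and, eq_comm]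

theorem glT_succ_eq_trace (k : ℕ) (b : Fin (k + 1) → A) :
    glT A N (k + 1) b = (List.ofFn fun r => currentMatrix N (b r)).prod.trace := by
  have h_succ (r : Fin (k + 1)) :
      (⟨(r + 1) % (k + 1), Nat.mod_lt _ r.pos⟩ : Fin (k + 1)) = finRotate _ r := by
    ext
    simp [Fin.val_add]
  simp only [glT, trace_list_prod_ofFn, h_succ]
  rfl

end CurrentMatrix

/-- `T_k(b₁,…,b_k)` commutes with `gl_N ≅ gl_N ⊗ 1` inside `U(gl_N ⊗ A)`. -/
theorem glT_commutes_with_gl (N k : ℕ) (hk : 1 ≤ k) (b : Fin k → A)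
    (j₁ j₂ : Fin N) :
    glT A N k b *
        UniversalEnvelopingAlgebra.ι ℂ
          ((1 : A) ⊗ₜ[ℂ] Matrix.single j₁ j₂ (1 : ℂ)) -
      UniversalEnvelopingAlgebra.ι ℂ
          ((1 : A) ⊗ₜ[ℂ] Matrix.single j₁ j₂ (1 : ℂ)) * glT A N k b = 0 := by
  obtain ⟨k, rfl⟩ := Nat.exists_eq_add_of_le' hk
  rw [sub_eq_zero, glT_succ_eq_trace]
  refine (Matrix.commute_trace_of_commute_diagonal_sub_single (i := j₂) (j := j₁)
    (Commute.list_prod_right _ _ ?_)).symm.eq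
  simp only [List.mem_ofFn, forall_exists_index]
  rintro _ r rfl
  exact commute_diagonal_sub_single_currentMatrix j₁ j₂ (b r)
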